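/- arXiv:1909.12280 — 3 statements merged into one kernel-verified Lean document; each statement's English description precedes it below -/
import Mathlib

section
/- For any positive integers q, M, N and any complex numbers (a_n), the sum over all Dirichlet characters χ mod q of |∑_{M < n ≤ M+N} a_n χ(n)|² is at most a constant times (φ(q) + (φ(q)/q)·N) times ∑_{M < n ≤ M+N, gcd(n,q)=1} |a_n|². -/
/-!
Group the `n` by their residue `r` modulo `q` and put `A r = ∑_{n ≡ r} a n`. Orthogonality of
the characters gives the exact identity `∑_χ |∑ a n χ(n)|² = φ(q) ∑_{r unit} |A r|²`. By
Cauchy–Schwarz `|A r|² ≤ #{n ≡ r} · ∑_{n ≡ r} |a n|²`, and an interval of length `N` contains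
at most `N / q + 1` integers of each residue class, so `C = 1` works.
-/

open Finset ComplexConjugate

theorem norm_sum_sq_le_card_mul_sum_norm_sq {ι E : Type*} [SeminormedAddCommGroup E]
    (s : Finset ι) (f : ι → E) : ‖∑ i ∈ s, f i‖ ^ 2 ≤ #s * ∑ i ∈ s, ‖f i‖ ^ 2 :=
  (pow_le_pow_left₀ (norm_nonneg _) (norm_sum_le _ _) 2).trans sq_sum_le_card_mul_sum_sq

theorem Nat.card_Ioc_filter_modEq_le {q : ℕ} (hq : 0 < q) (a N v : ℕ) :
    (#{n ∈ Ioc a (a + N) | n ≡ v [MOD q]} : ℝ) ≤ N / q + 1 := by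
  have hcard := Nat.Ioc_filter_modEq_card a (a + N) hq v
  set x : ℚ := (a - v) / q
  have hshift : ((a + N : ℕ) - v : ℚ) / q = x + N / q := by push_cast; ring
  rw [hshift] at hcard
  have hfloor : (⌊x + N / q⌋ - ⌊x⌋ : ℚ) ≤ N / q + 1 := by
    linarith [Int.floor_le (x + N / q), Int.sub_one_lt_floor x]
  have hℚ : (#{n ∈ Ioc a (a + N) | n ≡ v [MOD q]} : ℚ) ≤ N / q + 1 := by
    have hcardℚ := congrArg (Int.cast : ℤ → ℚ) hcard
    push_cast at hcardℚ
    rw [hcardℚ]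
    exact max_le hfloor (by positivity)
  have hℝ := (Rat.cast_le (K := ℝ)).2 hℚ
  push_cast at hℝ
  exact hℝ

namespace DirichletCharacter

variable {q : ℕ}

theorem conj_apply_of_isUnit (χ : DirichletCharacter ℂ q) {r : ZMod q} (hr : IsUnit r) :
    conj (χ r) = χ r⁻¹ := by
  rw [starRingEnd_apply, MulChar.star_apply', MulChar.inv_apply_eq_inv']
  refine (eq_inv_of_mul_eq_one_left ?_).symm
  rw [← map_mul, ZMod.inv_mul_of_unit r hr, map_one]

variable [NeZero q]

theorem sum_apply_mul_conj_apply (r : ZMod q) {s : ZMod q} (hs : IsUnit s) :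
    ∑ χ : DirichletCharacter ℂ q, χ r * conj (χ s) = if s = r then (q.totient : ℂ) else 0 := by
  rw [← sum_char_inv_mul_char_eq ℂ hs r]
  exact sum_congr rfl fun χ _ => by rw [conj_apply_of_isUnit χ hs, mul_comm]

theorem sum_norm_sq_sum_mul_apply (c : ZMod q → ℂ) :
    ∑ χ : DirichletCharacter ℂ q, ‖∑ r ∈ {r | IsUnit r}, c r * χ r‖ ^ 2 =
      q.totient * ∑ r ∈ {r : ZMod q | IsUnit r}, ‖c r‖ ^ 2 := by
  set U : Finset (ZMod q) := {r | IsUnit r}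
  apply Complex.ofReal_injective
  push_cast
  simp_rw [← Complex.mul_conj']
  calc ∑ χ : DirichletCharacter ℂ q, (∑ r ∈ U, c r * χ r) * conj (∑ s ∈ U, c s * χ s)
      = ∑ r ∈ U, ∑ s ∈ U, c r * conj (c s) * ∑ χ : DirichletCharacter ℂ q, χ r * conj (χ s) := by
        have hexpand (χ : DirichletCharacter ℂ q) :
            (∑ r ∈ U, c r * χ r) * conj (∑ s ∈ U, c s * χ s) =
              ∑ r ∈ U, ∑ s ∈ U, c r * conj (c s) * (χ r * conj (χ s)) := by
          rw [map_sum, sum_mul_sum]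
          exact sum_congr rfl fun r _ => sum_congr rfl fun s _ => by rw [map_mul]; ring
        simp_rw [hexpand, mul_sum]
        rw [sum_comm]
        exact sum_congr rfl fun r _ => sum_comm
    _ = q.totient * ∑ r ∈ U, c r * conj (c r) := by
        rw [mul_sum]
        refine sum_congr rfl fun r hr => ?_
        rw [sum_congr rfl fun s hs => by rw [sum_apply_mul_conj_apply r (mem_filter.1 hs).2]]
        simp only [mul_ite, mul_zero, sum_ite_eq', if_pos hr]
        ring

theorem sum_mul_apply_eq_sum_fiber (χ : DirichletCharacter ℂ q) (s : Finset ℕ) (a : ℕ → ℂ) :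
    ∑ n ∈ s, a n * χ n =
      ∑ r ∈ {r : ZMod q | IsUnit r}, (∑ n ∈ s with ((n : ℕ) : ZMod q) = r, a n) * χ r := by
  calc ∑ n ∈ s, a n * χ n = ∑ r, ∑ n ∈ s with ((n : ℕ) : ZMod q) = r, a n * χ n :=
        (sum_fiberwise_of_maps_to (fun _ _ => mem_univ _) _).symm
    _ = ∑ r, (∑ n ∈ s with ((n : ℕ) : ZMod q) = r, a n) * χ r := by
        simp_rw [sum_mul]
        exact sum_congr rfl fun r _ => sum_congr rfl fun n hn => by rw [(mem_filter.1 hn).2]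
    _ = _ := (sum_filter_of_ne fun r _ h => not_not.1 fun hr => h (by
          rw [χ.map_nonunit hr, mul_zero])).symm

theorem sum_norm_sq_sum_mul_apply_le_of_card_fiber_le (s : Finset ℕ) (a : ℕ → ℂ) {K : ℝ}
    (hK : ∀ r : ZMod q, (#{n ∈ s | ((n : ℕ) : ZMod q) = r} : ℝ) ≤ K) :
    ∑ χ : DirichletCharacter ℂ q, ‖∑ n ∈ s, a n * χ n‖ ^ 2 ≤
      q.totient * K * ∑ n ∈ s with IsUnit ((n : ℕ) : ZMod q), ‖a n‖ ^ 2 := by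
  simp_rw [sum_mul_apply_eq_sum_fiber _ s]
  rw [sum_norm_sq_sum_mul_apply, mul_assoc, ← sum_fiberwise_of_maps_to (g := ((↑) : ℕ → ZMod q))
    (t := {r | IsUnit r}) (fun n hn => by simpa using (mem_filter.1 hn).2)]
  gcongr _ * ?_
  rw [mul_sum]
  gcongr with r hr
  have hr : IsUnit r := (mem_filter.1 hr).2
  rw [filter_filter, filter_congr fun n _ => and_iff_right_of_imp fun h => h ▸ hr]
  exact (norm_sum_sq_le_card_mul_sum_norm_sq _ _).trans (by gcongr; exact hK r)

end DirichletCharacter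

/-- Orthogonality/large-sieve estimate: for any `q, M, N ≥ 1` and complex numbers `aₙ`,
`∑_{χ mod q} |∑_{M < n ≤ M+N} aₙ χ(n)|² ≪ (φ(q) + (φ(q)/q)·N) · ∑_{M<n≤M+N, (n,q)=1} |aₙ|²`. -/
theorem stmt1 :
    ∃ C : ℝ, 0 < C ∧ ∀ (q M N : ℕ), 0 < q → 0 < M → 0 < N → ∀ a : ℕ → ℂ,
      ∑ χ : DirichletCharacter ℂ q, ‖∑ n ∈ Ioc M (M + N), a n * χ (n : ZMod q)‖ ^ 2 ≤
        C * ((q.totient : ℝ) + (q.totient : ℝ) / (q : ℝ) * (N : ℝ)) *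
          ∑ n ∈ (Ioc M (M + N)).filter (fun n => Nat.gcd n q = 1), ‖a n‖ ^ 2 := by
  refine ⟨1, one_pos, fun q M N hq _ _ a => ?_⟩
  have : NeZero q := ⟨hq.ne'⟩
  have hfiber (r : ZMod q) :
      (#{n ∈ Ioc M (M + N) | ((n : ℕ) : ZMod q) = r} : ℝ) ≤ N / q + 1 := by
    rw [← ZMod.natCast_zmod_val r]
    simp_rw [ZMod.natCast_eq_natCast_iff]
    exact Nat.card_Ioc_filter_modEq_le hq M N r.val
  calc _ ≤ q.totient * (N / q + 1) *
          ∑ n ∈ Ioc M (M + N) with IsUnit ((n : ℕ) : ZMod q), ‖a n‖ ^ 2 :=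
        DirichletCharacter.sum_norm_sq_sum_mul_apply_le_of_card_fiber_le _ a hfiber
    _ = _ := by simp_rw [ZMod.isUnit_iff_coprime]; ring
end

section
/- Let f : ℕ → ℂ be multiplicative with |f(n)| ≤ 1 for all n, let 2 ≤ y ≤ x, and suppose f(p^k) = 0 for all primes p ≤ y and all k ≥ 1. Then for any t ∈ ℝ, |F(1 + 1/log x + it)| · (log y)/(log x) is bounded above and below by absolute constants times exp(−𝔻(f, n^{it}; y, x)²), where F(s) := ∏_{p ≤ x} ∑_{k ≥ 0} f(p^k) p^{−ks} and 𝔻(f, n^{it}; y, x)² := ∑_{y < p ≤ x} (1 − Re(f(p) p^{−it}))/p. -/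
/-!
The Euler factors at primes `p ≤ y` are `1`. For `p > y ≥ 2` the factor at `σ + it` is a power
series `1 + f(p) p^{-it} r + O(r²)` in `r = p^{-σ} ≤ 1/3`, so
`log |E_p| = Re(f(p) p^{-it}) / p + O(1/p² + (σ - 1) log p / p)`. For `σ = 1 + 1/log x`, Mertens'
first theorem `∑_{p ≤ x} log p / p = log x + O(1)` makes the total error `O(1)`, so
`log |F| = ∑_{y<p≤x} 1/p - 𝔻² + O(1)`, and Mertens' second theorem
`∑_{y<p≤x} 1/p = log log x - log log y + O(1)` gives the claim after exponentiating.

Mertens' first theorem comes from `log n! = ∑_{p ≤ n} v_p(n!) log p` with Legendre's bounds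
`n/p - 1 ≤ v_p(n!) ≤ n/(p-1)`, `n log n - n ≤ log n! ≤ n log n` and Chebyshev's `θ(n) ≤ n log 4`;
the second follows from the first by partial summation against `1 / log n`.
-/

open Finset Real
open Nat (primesLE mem_primesLE prime_of_mem_primesLE)
open scoped Nat

theorem sum_Ico_sub_mul_by_parts {R : Type*} [CommRing R] (A c : ℕ → R) {m N : ℕ} (h : m ≤ N) :
    ∑ n ∈ Ico m N, (A (n + 1) - A n) * c (n + 1) =
      A N * c N - A m * c m - ∑ n ∈ Ico m N, A n * (c (n + 1) - c n) := by
  rw [← sum_Ico_sub (fun n => A n * c n) h, ← sum_sub_distrib]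
  exact sum_congr rfl fun n _ => by ring

theorem sum_primesLE_succ_sub {M : Type*} [AddCommGroup M] (g : ℕ → M) (n : ℕ) :
    ∑ p ∈ primesLE (n + 1), g p - ∑ p ∈ primesLE n, g p =
      if (n + 1).Prime then g (n + 1) else 0 := by
  rw [Nat.primesLE_succ]
  split_ifs
  · rw [sum_insert (Nat.notMem_primesLE n), add_sub_cancel_right]
  · exact sub_self _

theorem sum_primesLE_mul_sub_eq_by_parts {R : Type*} [CommRing R] (w c : ℕ → R) {m N : ℕ}
    (h : m ≤ N) :
    ∑ p ∈ primesLE N, w p * c p - ∑ p ∈ primesLE m, w p * c p =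
      (∑ p ∈ primesLE N, w p) * c N - (∑ p ∈ primesLE m, w p) * c m -
        ∑ n ∈ Ico m N, (∑ p ∈ primesLE n, w p) * (c (n + 1) - c n) := by
  rw [← sum_Ico_sub (fun n => ∑ p ∈ primesLE n, w p * c p) h,
    ← sum_Ico_sub_mul_by_parts (fun n => ∑ p ∈ primesLE n, w p) c h]
  refine sum_congr rfl fun n _ => ?_
  simp only [sum_primesLE_succ_sub]
  split_ifs <;> simp

theorem mem_primesLE_sdiff {X Y p : ℕ} :
    p ∈ primesLE X \ primesLE Y ↔ p.Prime ∧ Y < p ∧ p ≤ X := by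
  simp only [mem_sdiff, mem_primesLE]
  constructor
  · rintro ⟨⟨hX, hp⟩, hY⟩
    exact ⟨hp, Nat.lt_of_not_le fun h => hY ⟨h, hp⟩, hX⟩
  · rintro ⟨hp, hY, hX⟩
    exact ⟨⟨hX, hp⟩, fun h => by omega⟩

theorem Real.log_factorial_eq_sum_primesLE (n : ℕ) :
    log (n ! : ℝ) = ∑ p ∈ primesLE n, ((n !).factorization p : ℝ) * log p := by
  rw [Real.log_nat_eq_sum_factorization, Finsupp.sum, Nat.support_factorization]
  refine sum_subset (fun p hp => ?_) (fun p _ hp => ?_)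
  · have hp' := Nat.mem_primeFactors.1 hp
    exact mem_primesLE.2 ⟨(Nat.Prime.dvd_factorial hp'.1).1 hp'.2.1, hp'.1⟩
  · simp [Finsupp.notMem_support_iff.1 (by rwa [Nat.support_factorization])]

theorem Nat.div_le_factorization_factorial {p : ℕ} (hp : p.Prime) (n : ℕ) :
    n / p ≤ (n !).factorization p := by
  rw [Nat.factorization_factorial hp (Nat.lt_add_of_pos_right two_pos : Nat.log p n < _ + 2)]
  simpa using single_le_sum (f := fun i => n / p ^ i) (fun _ _ => Nat.zero_le _)
    (show 1 ∈ Ico 1 (Nat.log p n + 2) by simp)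

theorem sum_primesLE_log_div_le (n : ℕ) :
    ∑ p ∈ primesLE n, log p / p ≤ log n + log 4 := by
  rcases n.eq_zero_or_pos with rfl | hn
  · simp [log_nonneg]
  have hn' : (0 : ℝ) < n := by exact_mod_cast hn
  have hθ : ∑ p ∈ primesLE n, log p ≤ n * log 4 := by
    simpa [Chebyshev.theta_eq_sum_primesLE, mul_comm] using Chebyshev.theta_le_log4_mul_x hn'.le
  have hv : ∀ p ∈ primesLE n, ((n : ℝ) / p - 1) * log p ≤ ((n !).factorization p : ℝ) * log p := by
    intro p hp
    have hp := prime_of_mem_primesLE hp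
    refine mul_le_mul_of_nonneg_right ?_ (log_natCast_nonneg p)
    calc (n : ℝ) / p - 1 ≤ (n / p : ℕ) := by
          rw [sub_le_iff_le_add, div_le_iff₀ (by exact_mod_cast hp.pos)]
          rw [add_one_mul]; exact_mod_cast (Nat.lt_div_mul_add (a := n) hp.pos).le
      _ ≤ _ := by exact_mod_cast Nat.div_le_factorization_factorial hp n
  have hfact : log (n ! : ℝ) ≤ n * log n := by
    rw [← log_pow]; gcongr; exact_mod_cast Nat.factorial_le_pow n
  have hmul : n * ∑ p ∈ primesLE n, log p / p - ∑ p ∈ primesLE n, log p ≤ n * log n := by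
    calc _ = ∑ p ∈ primesLE n, ((n : ℝ) / p - 1) * log p := by
          rw [mul_sum, ← sum_sub_distrib]; exact sum_congr rfl fun p _ => by ring
      _ ≤ log (n ! : ℝ) := (sum_le_sum hv).trans_eq (Real.log_factorial_eq_sum_primesLE n).symm
      _ ≤ _ := hfact
  exact le_of_mul_le_mul_left (by linarith) hn'

theorem Real.log_div_mul_sub_one_le {x : ℝ} (hx : 2 ≤ x) :
    log x / (x * (x - 1)) ≤ 4 * x ^ (-(3 / 2) : ℝ) := by
  have hx0 : 0 < x := by linarith
  have hlog : log x ≤ 2 * x ^ (1 / 2 : ℝ) := by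
    simpa [div_eq_mul_inv, mul_comm] using log_le_rpow_div hx0.le (by norm_num : (0 : ℝ) < 1 / 2)
  have hpow : x ^ (1 / 2 : ℝ) = x ^ (-(3 / 2) : ℝ) * x ^ 2 := by
    rw [← rpow_natCast, ← rpow_add hx0]; norm_num
  rw [div_le_iff₀ (by nlinarith)]
  have : 0 ≤ x ^ (-(3 / 2) : ℝ) := by positivity
  nlinarith [mul_nonneg this (by nlinarith : 0 ≤ x * (x - 2))]

theorem exists_log_sub_le_sum_primesLE_log_div :
    ∃ C, ∀ n : ℕ, log n - C ≤ ∑ p ∈ primesLE n, log p / p := by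
  set K := ∑' k : ℕ, 4 * (k : ℝ) ^ (-(3 / 2) : ℝ)
  have hK : 0 ≤ K := tsum_nonneg fun k => by positivity
  refine ⟨1 + K, fun n => ?_⟩
  rcases n.eq_zero_or_pos with rfl | hn
  · simp; linarith
  have hn' : (0 : ℝ) < n := by exact_mod_cast hn
  have hstirling : n * log n - n ≤ log (n ! : ℝ) := by
    have h := pow_div_factorial_le_exp (n : ℝ) hn'.le n
    rw [div_le_iff₀ (by positivity), ← log_le_log_iff (by positivity) (by positivity), log_mul
      (by positivity) (by positivity), log_exp, log_pow] at h
    linarith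
  have hv : ∀ p ∈ primesLE n,
      ((n !).factorization p : ℝ) * log p ≤ n * (log p / p + log p / (p * (p - 1))) := by
    intro p hp
    have hp := prime_of_mem_primesLE hp
    have hp2 : (2 : ℝ) ≤ p := by exact_mod_cast hp.two_le
    have hleg : ((p : ℝ) - 1) * (n !).factorization p ≤ n := by
      have h := (Nat.sub_one_mul_factorization_factorial (n := n) hp).trans_le (Nat.sub_le _ _)
      have h := (Nat.cast_le (α := ℝ)).2 h
      rwa [Nat.cast_mul, Nat.cast_sub hp.one_le, Nat.cast_one] at h
    calc ((n !).factorization p : ℝ) * log p ≤ n / (p - 1) * log p := by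
          refine mul_le_mul_of_nonneg_right ?_ (log_natCast_nonneg p)
          rw [le_div_iff₀ (by linarith)]; linarith
      _ = _ := by have := (show (0 : ℝ) < p - 1 by linarith).ne'; field_simp; ring
  have htail : ∑ p ∈ primesLE n, log p / (p * (p - 1)) ≤ K := by
    refine (sum_le_sum fun p hp => Real.log_div_mul_sub_one_le ?_).trans
      (((Real.summable_nat_rpow.2 (by norm_num)).mul_left 4).sum_le_tsum _ fun k _ => by positivity)
    exact_mod_cast (prime_of_mem_primesLE hp).two_le
  have hlogfact : log (n ! : ℝ) ≤ n * (∑ p ∈ primesLE n, log p / p + K) := by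
    calc log (n ! : ℝ) ≤ n * (∑ p ∈ primesLE n, log p / p +
          ∑ p ∈ primesLE n, log p / (p * (p - 1))) := by
          rw [Real.log_factorial_eq_sum_primesLE, ← sum_add_distrib, mul_sum]
          exact sum_le_sum hv
      _ ≤ _ := by gcongr
  refine le_of_mul_le_mul_left ?_ hn'
  linarith

theorem exists_abs_sum_primesLE_log_div_sub_log_le :
    ∃ C, ∀ n : ℕ, |∑ p ∈ primesLE n, log p / p - log n| ≤ C := by
  obtain ⟨C, hC⟩ := exists_log_sub_le_sum_primesLE_log_div
  exact ⟨max C (log 4), fun n => abs_sub_le_iff.2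
    ⟨by linarith [sum_primesLE_log_div_le n, le_max_right C (log 4)],
     by linarith [hC n, le_max_left C (log 4)]⟩⟩

theorem Real.abs_log_sub_log_sub_le {a b : ℝ} (ha : 0 < a) (hab : a ≤ b) :
    |log b - log a - (1 - a / b)| ≤ (b - a) ^ 2 / (a * b) := by
  have hb : 0 < b := ha.trans_le hab
  have h1 := one_sub_inv_le_log_of_pos (div_pos hb ha)
  have h2 := log_le_sub_one_of_pos (div_pos hb ha)
  rw [log_div hb.ne' ha.ne', inv_div] at h1
  rw [log_div hb.ne' ha.ne'] at h2
  have : b / a - 1 - (1 - a / b) = (b - a) ^ 2 / (a * b) := by field_simp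
  rw [abs_of_nonneg (by linarith)]
  linarith

theorem abs_log_log_succ_sub_sub_le {n : ℕ} (hn : 2 ≤ n) :
    |log (log ((n + 1 : ℕ) : ℝ)) - log (log n) -
        log n * ((log n)⁻¹ - (log ((n + 1 : ℕ) : ℝ))⁻¹)| ≤ 4 * ((n : ℝ) ^ 2)⁻¹ := by
  have hn' : (2 : ℝ) ≤ n := by exact_mod_cast hn
  have hlog2 : 1 / 2 < log (n : ℝ) :=
    (by linarith [log_two_gt_d9] : (1 : ℝ) / 2 < log 2).trans_le (log_le_log two_pos hn')
  have hmono : log (n : ℝ) ≤ log ((n + 1 : ℕ) : ℝ) :=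
    log_le_log (by linarith) (by push_cast; linarith)
  have hinc : log ((n + 1 : ℕ) : ℝ) - log n ≤ (n : ℝ)⁻¹ := by
    rw [← log_div (by positivity) (by positivity)]
    refine (log_le_sub_one_of_pos (by positivity)).trans_eq ?_
    push_cast; field_simp; ring
  have h := Real.abs_log_sub_log_sub_le (by linarith) hmono
  rw [show log (n : ℝ) * ((log n)⁻¹ - (log ((n + 1 : ℕ) : ℝ))⁻¹) =
      1 - log n / log ((n + 1 : ℕ) : ℝ) by field_simp]
  refine h.trans ?_
  have hsq : (log ((n + 1 : ℕ) : ℝ) - log n) ^ 2 ≤ ((n : ℝ) ^ 2)⁻¹ := by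
    rw [← inv_pow]; exact pow_le_pow_left₀ (by linarith) hinc 2
  have : (0 : ℝ) ≤ ((n : ℝ) ^ 2)⁻¹ := by positivity
  have hprod : 1 / 4 ≤ log (n : ℝ) * log ((n + 1 : ℕ) : ℝ) := by nlinarith
  rw [div_le_iff₀ (by linarith)]
  nlinarith [mul_le_mul_of_nonneg_left hprod this]

theorem inv_log_succ_le_inv_log {n : ℕ} (hn : 2 ≤ n) :
    (log ((n + 1 : ℕ) : ℝ))⁻¹ ≤ (log n)⁻¹ :=
  inv_anti₀ (log_pos (by exact_mod_cast hn)) (log_le_log (by positivity) (by push_cast; linarith))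

theorem abs_sum_Ico_mul_inv_log_sub_add_log_log_le {A : ℕ → ℝ} {K : ℝ}
    (hA : ∀ n, |A n - log n| ≤ K) {N : ℕ} (hN : 2 ≤ N) :
    |∑ n ∈ Ico 2 N, A n * ((log ((n + 1 : ℕ) : ℝ))⁻¹ - (log n)⁻¹) + (log (log N) - log (log 2))| ≤
      ∑' n : ℕ, 4 * ((n : ℝ) ^ 2)⁻¹ + K * (log 2)⁻¹ := by
  set c : ℕ → ℝ := fun n => (log n)⁻¹
  have hK : 0 ≤ K := (abs_nonneg _).trans (hA 0)
  have hloglog : log (log N) - log (log 2) =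
      ∑ n ∈ Ico 2 N, (log (log ((n + 1 : ℕ) : ℝ)) - log (log n)) :=
    (sum_Ico_sub (fun n : ℕ => log (log n)) hN).symm
  have hctele : ∑ n ∈ Ico 2 N, (c n - c (n + 1)) = c 2 - c N := by
    rw [← neg_sub, ← sum_Ico_sub c hN, ← sum_neg_distrib]; simp
  -- Splitting `A n = log n + O(1)`, the main part telescopes to `log log` up to `O(1/n²)` per
  -- term, and the `O(1)` part against the decreasing `c n` sums to `O(c 2)`.
  rw [hloglog, ← sum_add_distrib]
  calc _ = |∑ n ∈ Ico 2 N, ((log (log ((n + 1 : ℕ) : ℝ)) - log (log n) - log n * (c n - c (n + 1)))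
          - (A n - log n) * (c n - c (n + 1)))| := by
        congr 1; exact sum_congr rfl fun n _ => by ring
    _ ≤ ∑ n ∈ Ico 2 N, (4 * ((n : ℝ) ^ 2)⁻¹ + K * (c n - c (n + 1))) := by
        refine (abs_sum_le_sum_abs _ _).trans (sum_le_sum fun n hn => ?_)
        have hcn := sub_nonneg.2 (inv_log_succ_le_inv_log (mem_Ico.1 hn).1)
        refine (abs_sub _ _).trans (add_le_add (abs_log_log_succ_sub_sub_le (mem_Ico.1 hn).1) ?_)
        rw [abs_mul, abs_of_nonneg hcn]
        exact mul_le_mul_of_nonneg_right (hA n) hcn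
    _ ≤ _ := by
        rw [sum_add_distrib, ← mul_sum _ (fun n => c n - c (n + 1)) K, hctele]
        have := (Real.summable_nat_pow_inv.2 one_lt_two).mul_left 4 |>.sum_le_tsum (Ico 2 N)
          fun n _ => by positivity
        have : c 2 = (log 2)⁻¹ := by simp [c]
        have : 0 ≤ c N := inv_nonneg.2 (log_nonneg (by exact_mod_cast (one_le_two.trans hN)))
        nlinarith

theorem exists_abs_sum_primesLE_inv_sub_log_log_le :
    ∃ C, ∀ N : ℕ, 2 ≤ N → |∑ p ∈ primesLE N, (p : ℝ)⁻¹ - log (log N)| ≤ C := by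
  obtain ⟨K, hK⟩ := exists_abs_sum_primesLE_log_div_sub_log_le
  have hinv : ∀ n, ∑ p ∈ primesLE n, (p : ℝ)⁻¹ = ∑ p ∈ primesLE n, log p / p * (log p)⁻¹ :=
    fun n => sum_congr rfl fun p hp => by
      have : log (p : ℝ) ≠ 0 := (log_pos (by exact_mod_cast (prime_of_mem_primesLE hp).one_lt)).ne'
      field_simp
  set B : ℕ → ℝ := fun n => ∑ p ∈ primesLE n, log p / p
  set S := ∑ p ∈ primesLE 2, (p : ℝ)⁻¹
  refine ⟨|S - log (log 2)| + |B 2 * (log 2)⁻¹| + 1 + 2 * K * (log 2)⁻¹ +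
    ∑' n : ℕ, 4 * ((n : ℝ) ^ 2)⁻¹, fun N hN => ?_⟩
  have habel := sum_primesLE_mul_sub_eq_by_parts (fun p => log p / p) (fun n => (log n)⁻¹) hN
  simp only [← hinv, Nat.cast_ofNat] at habel
  have hsum := abs_sum_Ico_mul_inv_log_sub_add_log_log_le hK hN
  have hBN : |B N * (log N)⁻¹ - 1| ≤ K * (log 2)⁻¹ := by
    have hlogN : 0 < log (N : ℝ) := log_pos (by exact_mod_cast hN)
    rw [show B N * (log N)⁻¹ - 1 = (B N - log N) * (log N)⁻¹ by field_simp, abs_mul,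
      abs_of_pos (inv_pos.2 hlogN)]
    exact mul_le_mul (hK N) (inv_anti₀ (log_pos one_lt_two)
      (log_le_log two_pos (by exact_mod_cast hN))) (by positivity) ((abs_nonneg _).trans (hK 0))
  have := abs_le.1 hsum; have := abs_le.1 hBN
  rw [abs_le]
  constructor <;> linarith [le_abs_self (S - log (log 2)), neg_abs_le (S - log (log 2)),
    le_abs_self (B 2 * (log 2)⁻¹), neg_abs_le (B 2 * (log 2)⁻¹)]

theorem log_log_le_log_log_natFloor_add {x : ℝ} (hx : 2 ≤ x) :
    log (log x) ≤ log (log ⌊x⌋₊) + log 2 := by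
  have hX : (2 : ℝ) ≤ ⌊x⌋₊ := by exact_mod_cast Nat.le_floor (by exact_mod_cast hx)
  have hlogX : 0 < log (⌊x⌋₊ : ℝ) := log_pos (by linarith)
  have hsq : x ≤ (⌊x⌋₊ : ℝ) ^ 2 := by nlinarith [Nat.lt_floor_add_one x]
  rw [← log_mul hlogX.ne' two_ne_zero]
  refine log_le_log (log_pos (by linarith)) ?_
  calc log x ≤ log ((⌊x⌋₊ : ℝ) ^ 2) := log_le_log (by linarith) hsq
    _ = _ := by rw [log_pow]; push_cast; ring

theorem exists_abs_sum_primesLE_floor_inv_sub_log_log_le :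
    ∃ C, ∀ x : ℝ, 2 ≤ x → |∑ p ∈ primesLE ⌊x⌋₊, (p : ℝ)⁻¹ - log (log x)| ≤ C := by
  obtain ⟨C, hC⟩ := exists_abs_sum_primesLE_inv_sub_log_log_le
  refine ⟨C + log 2, fun x hx => ?_⟩
  have hX : 2 ≤ ⌊x⌋₊ := Nat.le_floor (by exact_mod_cast hx)
  have hlog : log (⌊x⌋₊ : ℝ) ≤ log x := log_le_log (by positivity) (Nat.floor_le (by linarith))
  have hmono : log (log ⌊x⌋₊) ≤ log (log x) := log_le_log (log_pos (by exact_mod_cast hX)) hlog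
  have := abs_le.1 (hC _ hX)
  have := log_log_le_log_log_natFloor_add hx
  rw [abs_le]; constructor <;> linarith [log_nonneg one_le_two]

theorem norm_tsum_mul_pow_add_le {a : ℕ → ℂ} (ha : ∀ k, ‖a k‖ ≤ 1) {r : ℝ} (hr0 : 0 ≤ r)
    (hr1 : r < 1) (n : ℕ) : ‖∑' k, a (k + n) * (r : ℂ) ^ (k + n)‖ ≤ r ^ n / (1 - r) := by
  refine tsum_of_norm_bounded (by simpa [div_eq_mul_inv] using
    (hasSum_geometric_of_lt_one hr0 hr1).mul_left (r ^ n)) fun k => ?_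
  rw [norm_mul, norm_pow, Complex.norm_real, norm_of_nonneg hr0, pow_add, mul_comm (r ^ k)]
  exact mul_le_of_le_one_left (by positivity) (ha _)

theorem abs_log_norm_tsum_mul_pow_sub_le {a : ℕ → ℂ} (ha : ∀ k, ‖a k‖ ≤ 1) (ha0 : a 0 = 1)
    {r : ℝ} (hr0 : 0 ≤ r) (hr : r ≤ 1 / 3) :
    1 / 2 ≤ ‖∑' k, a k * (r : ℂ) ^ k‖ ∧
      |log ‖∑' k, a k * (r : ℂ) ^ k‖ - r * (a 1).re| ≤ 4 * r ^ 2 := by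
  have hr1 : r < 1 := by linarith
  have hsum : Summable fun k => a k * (r : ℂ) ^ k :=
    .of_norm_bounded (summable_geometric_of_lt_one hr0 hr1) fun k => by
      simpa [norm_of_nonneg hr0] using mul_le_of_le_one_left (by positivity) (ha k)
  have hsplit : ∑' k, a k * (r : ℂ) ^ k = 1 + ∑' k, a (k + 1) * (r : ℂ) ^ (k + 1) := by
    rw [hsum.tsum_eq_zero_add, ha0, pow_zero, one_mul]
  have hzw : ∑' k, a (k + 1) * (r : ℂ) ^ (k + 1) =
      a 1 * r + ∑' k, a (k + 2) * (r : ℂ) ^ (k + 2) := by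
    rw [((summable_nat_add_iff 1).2 hsum).tsum_eq_zero_add, zero_add, pow_one]
  have hz := norm_tsum_mul_pow_add_le ha hr0 hr1 1
  have hw := norm_tsum_mul_pow_add_le ha hr0 hr1 2
  rw [hsplit]
  generalize ∑' k, a (k + 1) * (r : ℂ) ^ (k + 1) = z at *
  generalize ∑' k, a (k + 2) * (r : ℂ) ^ (k + 2) = w at *
  replace hz : ‖z‖ ≤ 3 / 2 * r := hz.trans (by rw [div_le_iff₀ (by linarith)]; nlinarith)
  replace hw : ‖w‖ ≤ 3 / 2 * r ^ 2 := hw.trans (by rw [div_le_iff₀ (by linarith)]; nlinarith)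
  have hlog : ‖Complex.log (1 + z) - z‖ ≤ 9 / 4 * r ^ 2 := by
    refine (Complex.norm_log_one_add_sub_self_le (by linarith)).trans ?_
    have : (1 - ‖z‖)⁻¹ ≤ 2 := by rw [inv_le_comm₀ (by linarith) two_pos]; linarith
    have : ‖z‖ ^ 2 ≤ (3 / 2 * r) ^ 2 := pow_le_pow_left₀ (norm_nonneg z) hz 2
    calc ‖z‖ ^ 2 * (1 - ‖z‖)⁻¹ / 2 ≤ ‖z‖ ^ 2 * 2 / 2 := by gcongr
      _ ≤ 9 / 4 * r ^ 2 := by nlinarith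
  refine ⟨?_, ?_⟩
  · have := norm_sub_norm_le (1 : ℂ) (-z)
    rw [sub_neg_eq_add, norm_one, norm_neg] at this
    linarith
  · have h1 := Complex.abs_re_le_norm (Complex.log (1 + z) - z)
    have h2 := Complex.abs_re_le_norm w
    have hre : z.re = r * (a 1).re + w.re := by simp [hzw, mul_comm]
    rw [Complex.sub_re, Complex.log_re, hre] at h1
    rw [abs_le] at h1 h2 ⊢
    constructor <;> nlinarith

noncomputable def eulerFactor (f : ℕ → ℂ) (s : ℂ) (p : ℕ) : ℂ :=
  ∑' k : ℕ, f (p ^ k) * (p : ℂ) ^ (-(k : ℂ) * s)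

theorem eulerFactor_eq_one {f : ℕ → ℂ} (hf1 : f 1 = 1) {p : ℕ}
    (hp : ∀ k, 1 ≤ k → f (p ^ k) = 0) (s : ℂ) : eulerFactor f s p = 1 := by
  rw [eulerFactor,
    tsum_eq_single 0 fun k hk => by rw [hp k (Nat.one_le_iff_ne_zero.2 hk), zero_mul]]
  simp [hf1]

theorem natCast_cpow_neg_mul {p : ℕ} (hp : p ≠ 0) (k : ℕ) (σ t : ℝ) :
    (p : ℂ) ^ (-(k : ℂ) * (σ + t * Complex.I)) =
      ((p : ℂ) ^ (-((t : ℂ) * Complex.I))) ^ k * (((p : ℝ) ^ (-σ) : ℝ) : ℂ) ^ k := by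
  rw [show -(k : ℂ) * (σ + t * Complex.I) = k * (-((t : ℂ) * Complex.I) + (-σ : ℝ)) by
    push_cast; ring, Complex.cpow_nat_mul, Complex.cpow_add _ _ (by exact_mod_cast hp), mul_pow,
    Complex.ofReal_cpow (Nat.cast_nonneg p), Complex.ofReal_natCast]

theorem norm_natCast_cpow_neg_mul_I {p : ℕ} (hp : 0 < p) (t : ℝ) :
    ‖(p : ℂ) ^ (-((t : ℂ) * Complex.I))‖ = 1 := by
  simp [Complex.norm_natCast_cpow_of_pos hp]

theorem abs_rpow_neg_sub_inv_le {p : ℝ} (hp : 1 ≤ p) {σ : ℝ} (hσ : 1 ≤ σ) :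
    |p ^ (-σ) - p⁻¹| ≤ (σ - 1) * log p / p := by
  have hp0 : 0 < p := by linarith
  have hu : 0 ≤ (σ - 1) * log p := mul_nonneg (by linarith) (log_nonneg hp)
  have heq : p ^ (-σ) = p⁻¹ * exp (-((σ - 1) * log p)) := by
    rw [show -σ = -1 + -(σ - 1) by ring, rpow_add hp0, rpow_neg_one, rpow_def_of_pos hp0]
    ring_nf
  have h1 := add_one_le_exp (-((σ - 1) * log p))
  have h2 : exp (-((σ - 1) * log p)) ≤ 1 := exp_le_one_iff.2 (by linarith)
  rw [heq, abs_sub_comm, abs_of_nonneg (by nlinarith [inv_pos.2 hp0]), div_eq_inv_mul]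
  nlinarith [inv_pos.2 hp0]

theorem eulerFactor_estimate {f : ℕ → ℂ} (hf : ∀ n, ‖f n‖ ≤ 1) (hf1 : f 1 = 1) {p : ℕ}
    (hp : p.Prime) (hp3 : 3 ≤ p) {σ : ℝ} (hσ : 1 ≤ σ) (t : ℝ) :
    1 / 2 ≤ ‖eulerFactor f (σ + t * Complex.I) p‖ ∧
      |log ‖eulerFactor f (σ + t * Complex.I) p‖ -
          (f p * (p : ℂ) ^ (-((t : ℂ) * Complex.I))).re / p|
        ≤ 4 * ((p : ℝ) ^ 2)⁻¹ + (σ - 1) * log p / p := by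
  set a : ℕ → ℂ := fun k => f (p ^ k) * ((p : ℂ) ^ (-((t : ℂ) * Complex.I))) ^ k
  set r : ℝ := (p : ℝ) ^ (-σ)
  have hp1 : (1 : ℝ) ≤ p := by exact_mod_cast hp.one_le
  have hp3' : (3 : ℝ) ≤ p := by exact_mod_cast hp3
  have hr0 : 0 ≤ r := by positivity
  have hrp : r ≤ (p : ℝ)⁻¹ := by
    simpa [rpow_neg_one] using rpow_le_rpow_of_exponent_le hp1 (neg_le_neg hσ)
  have hr3 : r ≤ 1 / 3 := hrp.trans (by rw [one_div]; gcongr)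
  have ha : ∀ k, ‖a k‖ ≤ 1 := fun k => by
    simpa [a, norm_natCast_cpow_neg_mul_I hp.pos] using hf (p ^ k)
  have hE : eulerFactor f (σ + t * Complex.I) p = ∑' k, a k * (r : ℂ) ^ k := by
    simp only [eulerFactor, a, natCast_cpow_neg_mul hp.ne_zero, mul_assoc, r]
  obtain ⟨hlow, hlog⟩ := abs_log_norm_tsum_mul_pow_sub_le ha (by simp [a, hf1]) hr0 hr3
  rw [hE]
  refine ⟨hlow, ?_⟩
  have ha1 : |(a 1).re| ≤ 1 := (Complex.abs_re_le_norm _).trans (ha 1)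
  have hclose := abs_rpow_neg_sub_inv_le hp1 hσ
  have hr2 : 4 * r ^ 2 ≤ 4 * ((p : ℝ) ^ 2)⁻¹ := by
    rw [← inv_pow]; gcongr
  have hmain : |r * (a 1).re - (a 1).re / p| ≤ (σ - 1) * log p / p := by
    rw [div_eq_mul_inv, mul_comm r, ← mul_sub, abs_mul]
    exact mul_le_of_le_one_left (abs_nonneg _) ha1 |>.trans hclose
  rw [show f p * (p : ℂ) ^ (-((t : ℂ) * Complex.I)) = a 1 by simp [a]]
  calc _ ≤ |log ‖∑' k, a k * (r : ℂ) ^ k‖ - r * (a 1).re| + |r * (a 1).re - (a 1).re / p| :=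
        abs_sub_le _ _ _
    _ ≤ _ := by linarith

theorem norm_prod_eulerFactor_eq_exp_sum {f : ℕ → ℂ} (hf : ∀ n, ‖f n‖ ≤ 1) (hf1 : f 1 = 1)
    {X Y : ℕ} (hY : 2 ≤ Y) (hvan : ∀ p ∈ primesLE Y, ∀ k, 1 ≤ k → f (p ^ k) = 0)
    {σ : ℝ} (hσ : 1 ≤ σ) (t : ℝ) :
    ‖∏ p ∈ primesLE X, eulerFactor f (σ + t * Complex.I) p‖ =
      exp (∑ p ∈ primesLE X \ primesLE Y, log ‖eulerFactor f (σ + t * Complex.I) p‖) := by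
  rw [← prod_subset (s₁ := primesLE X \ primesLE Y) sdiff_subset fun p hX hXY =>
    eulerFactor_eq_one hf1 (hvan p (of_not_not fun h => hXY (mem_sdiff.2 ⟨hX, h⟩))) _,
    norm_prod, exp_sum]
  refine prod_congr rfl fun p hp => (exp_log ?_).symm
  obtain ⟨hp, hYp, -⟩ := mem_primesLE_sdiff.1 hp
  exact one_half_pos.trans_le (eulerFactor_estimate hf hf1 hp (by omega) hσ t).1

theorem sum_primesLE_inv_sq_add_mul_log_div_le {x : ℝ} (hx : 2 ≤ x) :
    ∑ p ∈ primesLE ⌊x⌋₊, (4 * ((p : ℝ) ^ 2)⁻¹ + (1 + 1 / log x - 1) * log p / p) ≤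
      ∑' n : ℕ, 4 * ((n : ℝ) ^ 2)⁻¹ + 3 := by
  have hlog2 : log 2 ≤ log x := log_le_log two_pos hx
  have hlogx : 0 < log x := (log_pos one_lt_two).trans_le hlog2
  have h1 := ((Real.summable_nat_pow_inv.2 one_lt_two).mul_left 4).sum_le_tsum
    (primesLE ⌊x⌋₊) fun n _ => by positivity
  have h2 : ∑ p ∈ primesLE ⌊x⌋₊, (1 + 1 / log x - 1) * log p / p ≤ 3 := by
    simp_rw [add_sub_cancel_left, mul_div_assoc, ← mul_sum]
    have hfloor : log (⌊x⌋₊ : ℝ) ≤ log x :=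
      log_le_log (by exact_mod_cast Nat.floor_pos.2 (by linarith)) (Nat.floor_le (by linarith))
    have hM := sum_primesLE_log_div_le ⌊x⌋₊
    have hlog4 : log 4 = 2 * log 2 := by
      rw [show (4 : ℝ) = 2 ^ 2 by norm_num, log_pow]; push_cast; ring
    rw [one_div_mul_eq_div, div_le_iff₀ hlogx]
    linarith
  rw [sum_add_distrib]
  linarith

theorem filter_prime_lt_eq_primesLE_sdiff {x y : ℝ} (hy : 0 ≤ y) :
    (Icc 1 ⌊x⌋₊).filter (fun p : ℕ => p.Prime ∧ y < (p : ℝ)) = primesLE ⌊x⌋₊ \ primesLE ⌊y⌋₊ := by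
  ext p
  rw [mem_primesLE_sdiff, mem_filter, mem_Icc, Nat.floor_lt hy]
  exact ⟨fun ⟨⟨_, hx⟩, hp, hy⟩ => ⟨hp, hy, hx⟩, fun ⟨hp, hy, hx⟩ => ⟨⟨hp.one_le, hx⟩, hp, hy⟩⟩

theorem exists_abs_log_norm_prod_eulerFactor_add_le :
    ∃ K, ∀ f : ℕ → ℂ, (∀ n, ‖f n‖ ≤ 1) → f 1 = 1 → ∀ x y : ℝ, 2 ≤ y → y ≤ x →
      (∀ p k : ℕ, p.Prime → (p : ℝ) ≤ y → 1 ≤ k → f (p ^ k) = 0) → ∀ t : ℝ,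
        let Q := ‖∏ p ∈ primesLE ⌊x⌋₊,
          eulerFactor f ((1 + 1 / log x : ℝ) + t * Complex.I) p‖ * log y / log x
        0 < Q ∧ |log Q + ∑ p ∈ primesLE ⌊x⌋₊ \ primesLE ⌊y⌋₊,
          (1 - (f p * (p : ℂ) ^ (-((t : ℂ) * Complex.I))).re) / p| ≤ K := by
  obtain ⟨C, hC⟩ := exists_abs_sum_primesLE_floor_inv_sub_log_log_le
  refine ⟨∑' n : ℕ, 4 * ((n : ℝ) ^ 2)⁻¹ + 3 + 2 * C, fun f hf hf1 x y hy hyx hvan t => ?_⟩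
  intro Q
  have hx : 2 ≤ x := hy.trans hyx
  have hlogy : 0 < log y := log_pos (by linarith)
  have hlogx : 0 < log x := log_pos (by linarith)
  have hσ : 1 ≤ 1 + 1 / log x := le_add_of_nonneg_right (one_div_pos.2 hlogx).le
  have hvan' : ∀ p ∈ primesLE ⌊y⌋₊, ∀ k, 1 ≤ k → f (p ^ k) = 0 := fun p hp k hk =>
    hvan p k (prime_of_mem_primesLE hp) ((Nat.le_floor_iff (by linarith)).1
      (Nat.le_of_mem_primesLE hp)) hk
  set P := primesLE ⌊x⌋₊ \ primesLE ⌊y⌋₊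
  set E := fun p => eulerFactor f ((1 + 1 / log x : ℝ) + t * Complex.I) p
  have hY : 2 ≤ ⌊y⌋₊ := Nat.le_floor (by exact_mod_cast hy)
  have hQ : Q = exp (∑ p ∈ P, log ‖E p‖) * log y / log x := by
    rw [← norm_prod_eulerFactor_eq_exp_sum hf hf1 hY hvan' hσ t]
  obtain ⟨a, ha⟩ : ∃ a : ℕ → ℝ, ∀ p, (f p * (p : ℂ) ^ (-((t : ℂ) * Complex.I))).re = a p :=
    ⟨_, fun _ => rfl⟩
  simp only [ha]
  have herr : |∑ p ∈ P, log ‖E p‖ - ∑ p ∈ P, a p / p| ≤ ∑' n : ℕ, 4 * ((n : ℝ) ^ 2)⁻¹ + 3 := by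
    rw [← sum_sub_distrib]
    refine (abs_sum_le_sum_abs _ _).trans <| (sum_le_sum fun p hp => ?_).trans <|
      (sum_le_sum_of_subset_of_nonneg sdiff_subset fun p _ _ => ?_).trans
        (sum_primesLE_inv_sq_add_mul_log_div_le hx)
    · obtain ⟨hp, hyp, -⟩ := mem_primesLE_sdiff.1 hp
      simpa only [ha] using (eulerFactor_estimate hf hf1 hp (by omega) hσ t).2
    · exact add_nonneg (by positivity) (by have := log_natCast_nonneg p; positivity)
  have hmert : |∑ p ∈ P, (p : ℝ)⁻¹ - (log (log x) - log (log y))| ≤ 2 * C := by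
    rw [sum_sdiff_eq_sub (Nat.primesLE_mono (Nat.floor_mono hyx))]
    have := abs_le.1 (hC x hx); have := abs_le.1 (hC y hy)
    rw [abs_le]; constructor <;> linarith
  have hD : ∑ p ∈ P, (1 - a p) / p = ∑ p ∈ P, (p : ℝ)⁻¹ - ∑ p ∈ P, a p / p := by
    rw [← sum_sub_distrib]; exact sum_congr rfl fun p _ => by ring
  refine ⟨by rw [hQ]; positivity, ?_⟩
  rw [hQ, log_div (by positivity) hlogx.ne', log_mul (by positivity) hlogy.ne', log_exp, hD]
  have := abs_le.1 herr; have := abs_le.1 hmert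
  rw [abs_le]; constructor <;> linarith

theorem Real.exp_neg_mul_exp_neg_le_and_le_of_abs_log_add_le {Q D K : ℝ} (hQ : 0 < Q)
    (h : |log Q + D| ≤ K) : exp (-K) * exp (-D) ≤ Q ∧ Q ≤ exp K * exp (-D) := by
  have := abs_le.1 h
  constructor
  · calc exp (-K) * exp (-D) = exp (-K + -D) := (exp_add ..).symm
      _ ≤ exp (log Q) := exp_le_exp.2 (by linarith)
      _ = Q := exp_log hQ
  · calc Q = exp (log Q) := (exp_log hQ).symm
      _ ≤ exp (K + -D) := exp_le_exp.2 (by linarith)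
      _ = exp K * exp (-D) := exp_add ..

/-- For a 1-bounded multiplicative `f` vanishing on prime powers with prime `≤ y`,
`|F(1+1/log x+it)| ≍ (log x/log y) · exp(−𝔻(f, n^{it}; y, x)²)` with absolute constants,
where `F` is the truncated Euler product over primes `p ≤ x`. -/
theorem stmt5 :
    ∃ c C : ℝ, 0 < c ∧ 0 < C ∧
      ∀ (f : ℕ → ℂ), (∀ n, ‖f n‖ ≤ 1) → f 1 = 1 →
        (∀ m n : ℕ, Nat.Coprime m n → f (m * n) = f m * f n) →
        ∀ x y : ℝ, 2 ≤ y → y ≤ x →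
          (∀ p k : ℕ, Nat.Prime p → (p : ℝ) ≤ y → 1 ≤ k → f (p ^ k) = 0) →
          ∀ t : ℝ,
            c * Real.exp (-(∑ p ∈ (Icc 1 ⌊x⌋₊).filter (fun p => Nat.Prime p ∧ y < (p : ℝ)),
                  (1 - (f p * (p : ℂ) ^ (-((t : ℂ) * Complex.I))).re) / (p : ℝ))) ≤
              ‖∏ p ∈ (Icc 1 ⌊x⌋₊).filter Nat.Prime,
                  ∑' k : ℕ, f (p ^ k) *
                    (p : ℂ) ^ (-(k : ℂ) * (((1 + 1 / Real.log x : ℝ) : ℂ) + t * Complex.I))‖ *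
                Real.log y / Real.log x ∧
            ‖∏ p ∈ (Icc 1 ⌊x⌋₊).filter Nat.Prime,
                ∑' k : ℕ, f (p ^ k) *
                  (p : ℂ) ^ (-(k : ℂ) * (((1 + 1 / Real.log x : ℝ) : ℂ) + t * Complex.I))‖ *
              Real.log y / Real.log x ≤
              C * Real.exp (-(∑ p ∈ (Icc 1 ⌊x⌋₊).filter (fun p => Nat.Prime p ∧ y < (p : ℝ)),
                  (1 - (f p * (p : ℂ) ^ (-((t : ℂ) * Complex.I))).re) / (p : ℝ))) := by
  obtain ⟨K, hK⟩ := exists_abs_log_norm_prod_eulerFactor_add_le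
  refine ⟨exp (-K), exp K, exp_pos _, exp_pos _, fun f hf hf1 _ x y hy hyx hvan t => ?_⟩
  obtain ⟨hQ, hbound⟩ := hK f hf hf1 x y hy hyx hvan t
  rw [filter_prime_lt_eq_primesLE_sdiff (by linarith), ← Nat.primesLE_eq_filter_Icc_one]
  exact Real.exp_neg_mul_exp_neg_le_and_le_of_abs_log_add_le hQ hbound
end

section
/- With W̃ as above, let F(u) := W̃(−u/log y) = κ^{−2}·(e^{−(1+κ)u} − e^{−(1+κ−κ²)u} − e^{−(1+κ²)u} + e^{−u})·(log y)²/u² for u ≠ 0, extended continuously to u = 0. Then F(0) = κ(1−κ)·(log y)², and F is decreasing on [0, ∞). -/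
/-- The trapezoid function `g` with parameter `κ`. -/
noncomputable def trap (κ u : ℝ) : ℝ :=
  if u < 0 then 0
  else if u ≤ κ ^ 2 then (κ ^ 2)⁻¹ * u
  else if u ≤ κ - κ ^ 2 then 1
  else if u ≤ κ then (κ ^ 2)⁻¹ * (κ - u)
  else 0

/-- The weight `W(t) = g(log(t/y)/log y)·log y`. -/
noncomputable def trapW (κ y t : ℝ) : ℝ :=
  trap κ (Real.log (t / y) / Real.log y) * Real.log y

/-- `F(u) := W̃(−u/log y) = ∫₀^∞ W(t) t^{−u/log y − 1} dt`. -/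
noncomputable def trapF (κ y u : ℝ) : ℝ :=
  ∫ t in Set.Ioi (0 : ℝ), trapW κ y t * t ^ (-u / Real.log y - 1)

/-!
The substitution `t = y ^ (1 + v)` turns `F` into `(log y)² ∫₀^κ g(v) e^{-u(1+v)} dv`. As `g ≥ 0`
and `1 + v > 0`, this is decreasing in `u` (on all of `ℝ`). The integral is elementary on each of
the three linear pieces of the trapezoid `g`; for `u ≠ 0` the boundary terms combine into the
second difference of exponentials in the statement, and at `u = 0` it is the area `κ - κ²` of `g`.
-/

open Real Set MeasureTheory

theorem integral_Ioi_zero_eq_integral_comp_exp {E : Type*} [NormedAddCommGroup E]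
    [NormedSpace ℝ E] (g : ℝ → E) {a : ℝ} (ha : 0 < a) (b : ℝ) :
    ∫ t in Ioi 0, g t = ∫ x, (a * exp (a * x + b)) • g (exp (a * x + b)) := by
  have himage : (fun x => exp (a * x + b)) '' univ = Ioi 0 := by
    refine Subset.antisymm (fun _ ⟨x, _, hx⟩ => hx ▸ exp_pos _) fun t (ht : 0 < t) => ?_
    exact ⟨(log t - b) / a, trivial, by
      simp only [mul_div_cancel₀ _ ha.ne', sub_add_cancel, exp_log ht]⟩
  have hderiv : ∀ x ∈ univ,
      HasDerivWithinAt (fun x => exp (a * x + b)) (a * exp (a * x + b)) univ x := fun x _ => by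
    refine HasDerivAt.hasDerivWithinAt ?_
    simpa [mul_comm] using (((hasDerivAt_id x).const_mul a).add_const b).exp
  have hinj : InjOn (fun x => exp (a * x + b)) univ := fun x _ x' _ h => by
    simpa [ha.ne'] using h
  rw [← himage, integral_image_eq_integral_abs_deriv_smul MeasurableSet.univ hderiv hinj,
    setIntegral_univ]
  simp_rw [abs_of_pos (mul_pos ha (exp_pos _))]

theorem antitone_integral_mul_exp_neg_mul {φ g : ℝ → ℝ} {a b : ℝ} (hab : a ≤ b)
    (hφ : Continuous φ) (hg : Continuous g) (hφ0 : ∀ v ∈ Icc a b, 0 ≤ φ v)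
    (hg0 : ∀ v ∈ Icc a b, 0 ≤ g v) :
    Antitone fun u => ∫ v in a..b, φ v * exp (-u * g v) := fun u w huw =>
  intervalIntegral.integral_mono_on hab (Continuous.intervalIntegrable (by fun_prop) _ _)
    (Continuous.intervalIntegrable (by fun_prop) _ _) fun v hv =>
      mul_le_mul_of_nonneg_left (exp_le_exp.2 (by nlinarith [hg0 v hv])) (hφ0 v hv)

theorem integral_exp_neg_mul_one_add {u : ℝ} (hu : u ≠ 0) (p q : ℝ) :
    ∫ v in p..q, exp (-u * (1 + v)) = (exp (-u * (1 + p)) - exp (-u * (1 + q))) / u := by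
  have hderiv : ∀ v ∈ uIcc p q,
      HasDerivAt (fun w => -exp (-u * (1 + w)) / u) (exp (-u * (1 + v))) v := fun v _ => by
    have h := ((((hasDerivAt_id' v).const_add 1).const_mul (-u)).exp.neg).div_const u
    refine h.congr_deriv ?_
    field_simp
  rw [intervalIntegral.integral_eq_sub_of_hasDerivAt hderiv
    (Continuous.intervalIntegrable (by fun_prop) _ _)]
  ring

theorem integral_mul_exp_neg_mul_one_add {u : ℝ} (hu : u ≠ 0) (p q : ℝ) :
    ∫ v in p..q, v * exp (-u * (1 + v)) =
      (p / u + 1 / u ^ 2) * exp (-u * (1 + p)) - (q / u + 1 / u ^ 2) * exp (-u * (1 + q)) := by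
  have hderiv : ∀ v ∈ uIcc p q, HasDerivAt (fun w => -((w / u + 1 / u ^ 2) * exp (-u * (1 + w))))
      (v * exp (-u * (1 + v))) v := fun v _ => by
    have h := ((((hasDerivAt_id' v).div_const u).add_const (1 / u ^ 2)).mul
      (((hasDerivAt_id' v).const_add 1).const_mul (-u)).exp).neg
    refine h.congr_deriv ?_
    field_simp
    ring
  rw [intervalIntegral.integral_eq_sub_of_hasDerivAt hderiv
    (Continuous.intervalIntegrable (by fun_prop) _ _)]
  ring

section Trapezoid

variable {κ : ℝ} (hκ : 0 < κ) (hκ2 : κ ≤ 1 / 2)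
include hκ hκ2

theorem trap_eq_max_min (u : ℝ) :
    trap κ u = max 0 (min ((κ ^ 2)⁻¹ * u) (min 1 ((κ ^ 2)⁻¹ * (κ - u)))) := by
  have hκ2pos : 0 < κ ^ 2 := by positivity
  have hκκ : κ ^ 2 ≤ κ - κ ^ 2 := by nlinarith
  unfold trap
  simp only [← div_eq_inv_mul]
  split_ifs with h1 h2 h3 h4
  · exact (max_eq_left (min_le_of_left_le (div_nonpos_of_nonpos_of_nonneg h1.le hκ2pos.le))).symm
  · rw [min_eq_left (le_min ?_ ?_), max_eq_right (div_nonneg (not_lt.1 h1) hκ2pos.le)]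
    · exact (div_le_one hκ2pos).2 h2
    · exact div_le_div_of_nonneg_right (by linarith) hκ2pos.le
  · rw [min_eq_left ((one_le_div hκ2pos).2 (by linarith)),
      min_eq_right ((one_le_div hκ2pos).2 (by linarith)), max_eq_right zero_le_one]
  · rw [min_eq_right ((div_le_one hκ2pos).2 (by linarith)),
      min_eq_right (div_le_div_of_nonneg_right (by linarith) hκ2pos.le),
      max_eq_right (div_nonneg (by linarith) hκ2pos.le)]
  · exact (max_eq_left (min_le_of_right_le (min_le_of_right_le
      (div_nonpos_of_nonpos_of_nonneg (by linarith) hκ2pos.le)))).symm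

theorem continuous_trap : Continuous (trap κ) := by
  rw [funext (trap_eq_max_min hκ hκ2)]
  fun_prop

theorem trap_nonneg (v : ℝ) : 0 ≤ trap κ v :=
  trap_eq_max_min hκ hκ2 v ▸ le_max_left _ _

theorem trap_eq_zero_of_notMem_Ioc {v : ℝ} (hv : v ∉ Ioc 0 κ) : trap κ v = 0 := by
  have hc : 0 < (κ ^ 2)⁻¹ := by positivity
  rw [trap_eq_max_min hκ hκ2, max_eq_left]
  rcases not_and_or.1 hv with h | h
  · exact min_le_of_left_le (mul_nonpos_of_nonneg_of_nonpos hc.le (not_lt.1 h))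
  · exact min_le_of_right_le (min_le_of_right_le
      (mul_nonpos_of_nonneg_of_nonpos hc.le (by linarith [not_le.1 h])))

theorem trap_of_mem_Icc_left {v : ℝ} (hv : v ∈ Icc 0 (κ ^ 2)) : trap κ v = (κ ^ 2)⁻¹ * v := by
  have hc : 0 < (κ ^ 2)⁻¹ := by positivity
  have hone : 1 = (κ ^ 2)⁻¹ * κ ^ 2 := (inv_mul_cancel₀ (by positivity)).symm
  have hle_one : (κ ^ 2)⁻¹ * v ≤ 1 := hone ▸ mul_le_mul_of_nonneg_left hv.2 hc.le
  have hle_right : (κ ^ 2)⁻¹ * v ≤ (κ ^ 2)⁻¹ * (κ - v) :=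
    mul_le_mul_of_nonneg_left (by nlinarith [hv.2]) hc.le
  rw [trap_eq_max_min hκ hκ2, min_eq_left (le_min hle_one hle_right),
    max_eq_right (mul_nonneg hc.le hv.1)]

theorem trap_of_mem_Icc_mid {v : ℝ} (hv : v ∈ Icc (κ ^ 2) (κ - κ ^ 2)) : trap κ v = 1 := by
  have hc : 0 < (κ ^ 2)⁻¹ := by positivity
  have hone : 1 = (κ ^ 2)⁻¹ * κ ^ 2 := (inv_mul_cancel₀ (by positivity)).symm
  have hleft : 1 ≤ (κ ^ 2)⁻¹ * v := hone ▸ mul_le_mul_of_nonneg_left hv.1 hc.le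
  have hright : 1 ≤ (κ ^ 2)⁻¹ * (κ - v) :=
    hone ▸ mul_le_mul_of_nonneg_left (by linarith [hv.2]) hc.le
  rw [trap_eq_max_min hκ hκ2, min_eq_left hright, min_eq_right hleft, max_eq_right zero_le_one]

theorem trap_of_mem_Icc_right {v : ℝ} (hv : v ∈ Icc (κ - κ ^ 2) κ) :
    trap κ v = (κ ^ 2)⁻¹ * (κ - v) := by
  have hc : 0 < (κ ^ 2)⁻¹ := by positivity
  have hone : 1 = (κ ^ 2)⁻¹ * κ ^ 2 := (inv_mul_cancel₀ (by positivity)).symm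
  have hle_one : (κ ^ 2)⁻¹ * (κ - v) ≤ 1 :=
    hone ▸ mul_le_mul_of_nonneg_left (by linarith [hv.1]) hc.le
  have hle_left : (κ ^ 2)⁻¹ * (κ - v) ≤ (κ ^ 2)⁻¹ * v :=
    mul_le_mul_of_nonneg_left (by nlinarith [hv.1]) hc.le
  rw [trap_eq_max_min hκ hκ2, min_eq_right hle_one, min_eq_right hle_left,
    max_eq_right (mul_nonneg hc.le (by linarith [hv.2]))]

theorem integral_trap_mul {f : ℝ → ℝ} (hf : Continuous f) :
    ∫ v in (0 : ℝ)..κ, trap κ v * f v =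
      (κ ^ 2)⁻¹ * ((∫ v in (0 : ℝ)..κ ^ 2, v * f v) + κ ^ 2 * (∫ v in κ ^ 2..κ - κ ^ 2, f v)
        + κ * (∫ v in κ - κ ^ 2..κ, f v) - ∫ v in κ - κ ^ 2..κ, v * f v) := by
  have hint : ∀ p q : ℝ, IntervalIntegrable (fun v => trap κ v * f v) volume p q :=
    fun p q => ((continuous_trap hκ hκ2).mul hf).intervalIntegrable p q
  have h0 : (0 : ℝ) ≤ κ ^ 2 := by positivity
  have h1 : κ ^ 2 ≤ κ - κ ^ 2 := by nlinarith
  have h2 : κ - κ ^ 2 ≤ κ := by nlinarith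
  have hleft : ∫ v in (0 : ℝ)..κ ^ 2, trap κ v * f v =
      (κ ^ 2)⁻¹ * ∫ v in (0 : ℝ)..κ ^ 2, v * f v := by
    rw [← intervalIntegral.integral_const_mul]
    refine intervalIntegral.integral_congr fun v hv => ?_
    rw [uIcc_of_le h0] at hv
    simp only [trap_of_mem_Icc_left hκ hκ2 hv, mul_assoc]
  have hmid : ∫ v in κ ^ 2..κ - κ ^ 2, trap κ v * f v = ∫ v in κ ^ 2..κ - κ ^ 2, f v := by
    refine intervalIntegral.integral_congr fun v hv => ?_
    rw [uIcc_of_le h1] at hv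
    simp only [trap_of_mem_Icc_mid hκ hκ2 hv, one_mul]
  have hright : ∫ v in κ - κ ^ 2..κ, trap κ v * f v =
      (κ ^ 2)⁻¹ * (κ * (∫ v in κ - κ ^ 2..κ, f v) - ∫ v in κ - κ ^ 2..κ, v * f v) := by
    rw [← intervalIntegral.integral_const_mul, ← intervalIntegral.integral_sub
      (Continuous.intervalIntegrable (by fun_prop) _ _)
      (Continuous.intervalIntegrable (by fun_prop) _ _), ← intervalIntegral.integral_const_mul]
    refine intervalIntegral.integral_congr fun v hv => ?_
    rw [uIcc_of_le h2] at hv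
    simp only [trap_of_mem_Icc_right hκ hκ2 hv]
    ring
  rw [← intervalIntegral.integral_add_adjacent_intervals (hint 0 (κ ^ 2)) (hint (κ ^ 2) κ),
    ← intervalIntegral.integral_add_adjacent_intervals (hint (κ ^ 2) (κ - κ ^ 2))
      (hint (κ - κ ^ 2) κ), hleft, hmid, hright]
  field_simp
  ring

theorem integral_trap_mul_exp {u : ℝ} (hu : u ≠ 0) :
    ∫ v in (0 : ℝ)..κ, trap κ v * exp (-u * (1 + v)) =
      (κ ^ 2)⁻¹ * (exp (-(1 + κ) * u) - exp (-(1 + κ - κ ^ 2) * u)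
        - exp (-(1 + κ ^ 2) * u) + exp (-u)) / u ^ 2 := by
  rw [integral_trap_mul hκ hκ2 (by fun_prop), integral_mul_exp_neg_mul_one_add hu,
    integral_mul_exp_neg_mul_one_add hu, integral_exp_neg_mul_one_add hu,
    integral_exp_neg_mul_one_add hu]
  rw [show -u * (1 + (0 : ℝ)) = -u by ring, show -u * (1 + κ ^ 2) = -(1 + κ ^ 2) * u by ring,
    show -u * (1 + (κ - κ ^ 2)) = -(1 + κ - κ ^ 2) * u by ring,
    show -u * (1 + κ) = -(1 + κ) * u by ring]
  field_simp
  ring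

theorem integral_trap : ∫ v in (0 : ℝ)..κ, trap κ v = κ - κ ^ 2 := by
  have h := integral_trap_mul hκ hκ2 (f := fun _ => (1 : ℝ)) continuous_const
  simp only [mul_one, integral_id, intervalIntegral.integral_const, smul_eq_mul] at h
  rw [h]
  field_simp
  ring

theorem trapF_eq_integral {y : ℝ} (hy : 1 < y) (u : ℝ) :
    trapF κ y u = log y ^ 2 * ∫ v in (0 : ℝ)..κ, trap κ v * exp (-u * (1 + v)) := by
  rw [trapF]
  set L := log y with hL_def
  have hL : 0 < L := log_pos hy
  have hpoint : ∀ v : ℝ, (L * exp (L * v + L)) •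
      (trapW κ y (exp (L * v + L)) * exp (L * v + L) ^ (-u / L - 1)) =
        L ^ 2 * (trap κ v * exp (-u * (1 + v))) := fun v => by
    have hlog : log (exp (L * v + L) / y) / L = v := by
      rw [log_div (exp_pos _).ne' (by linarith), log_exp, ← hL_def]
      field_simp
      ring
    have hexp : exp (L * v + L) * exp ((L * v + L) * (-u / L - 1)) = exp (-u * (1 + v)) := by
      rw [← exp_add]
      congr 1
      field_simp
      ring
    rw [trapW, hlog, rpow_def_of_pos (exp_pos _), log_exp, smul_eq_mul, ← hL_def]
    linear_combination L ^ 2 * trap κ v * hexp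
  rw [integral_Ioi_zero_eq_integral_comp_exp _ hL L]
  simp_rw [hpoint]
  rw [integral_const_mul, intervalIntegral.integral_of_le hκ.le,
    setIntegral_eq_integral_of_forall_compl_eq_zero fun v hv => by
      rw [trap_eq_zero_of_notMem_Ioc hκ hκ2 hv, zero_mul]]

end Trapezoid

/-- `F(u) = κ^{−2}(e^{−(1+κ)u} − e^{−(1+κ−κ²)u} − e^{−(1+κ²)u} + e^{−u})(log y)²/u²` for
`u ≠ 0`, `F(0) = κ(1−κ)(log y)²`, and `F` is decreasing on `[0, ∞)`. -/
theorem stmt15 (κ y : ℝ) (hκ : 0 < κ) (hκ2 : κ < 1 / 2) (hy : Real.exp 1 < y) :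
    (∀ u : ℝ, u ≠ 0 →
        trapF κ y u = (κ ^ 2)⁻¹ *
          (Real.exp (-(1 + κ) * u) - Real.exp (-(1 + κ - κ ^ 2) * u)
            - Real.exp (-(1 + κ ^ 2) * u) + Real.exp (-u)) * (Real.log y) ^ 2 / u ^ 2) ∧
      trapF κ y 0 = κ * (1 - κ) * (Real.log y) ^ 2 ∧
      AntitoneOn (trapF κ y) (Set.Ici 0) := by
  have hF := trapF_eq_integral hκ hκ2.le ((one_lt_exp_iff.2 one_pos).trans hy)
  refine ⟨fun u hu => ?_, ?_, ?_⟩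
  · rw [hF, integral_trap_mul_exp hκ hκ2.le hu]
    ring
  · simp only [hF, neg_zero, zero_mul, exp_zero, mul_one, integral_trap hκ hκ2.le]
    ring
  · have hanti : Antitone (trapF κ y) := by
      rw [funext hF]
      refine (antitone_integral_mul_exp_neg_mul hκ.le (continuous_trap hκ hκ2.le) (by fun_prop)
        (fun v _ => trap_nonneg hκ hκ2.le v) fun v hv => ?_).const_mul (sq_nonneg _)
      linarith [hv.1]
    exact hanti.antitoneOn _
end
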